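/- The eigenvalues of the Jacobian of the 1D Toro–Vázquez-Cendón pressure sub-flux f^fast(q) = (0, p, (ρe + p)u) with respect to q = (ρ, ρu, ρE), for the ideal gas law p = (γ−1)ρe, are λ₁ = 0 and λ_{2,3} = (u ± √(u² + 4c²))/2 where c² = γ p/ρ. -/

import Mathlib

set_option maxHeartbeats 1000000


/-- The Toro–Vázquez-Cendón pressure sub-flux `f^fast(q) = (0, p, (ρe+p)u)`
in conserved variables `q = (ρ, m, E)`, with ideal gas law
`p = (γ-1)ρe = (γ-1)(E - m²/(2ρ))` and `u = m/ρ`. -/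
noncomputable def pressureFlux (γ : ℝ) (q : Fin 3 → ℝ) : Fin 3 → ℝ :=
  ![0, (γ - 1) * (q 2 - (q 1) ^ 2 / (2 * q 0)),
    ((q 2 - (q 1) ^ 2 / (2 * q 0)) + (γ - 1) * (q 2 - (q 1) ^ 2 / (2 * q 0)))
      * (q 1 / q 0)]

noncomputable def pfProj (j : Fin 3) : (Fin 3 → ℝ) →L[ℝ] ℝ := ContinuousLinearMap.proj j

/-- The Jacobian of the pressure sub-flux has characteristic polynomial
`t (t² - u t - c²)` with `c² = γ p / ρ`; its eigenvalues are `0` and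
`(u ± √(u² + 4c²))/2`. -/
theorem pressureFlux_eigenvalues (γ ρ m E : ℝ) (hρ : 0 < ρ) (hγ : 1 < γ)
    (he : 0 < (E - m ^ 2 / (2 * ρ)) / ρ)
    (u c2 : ℝ) (hu : u = m / ρ)
    (hc2 : c2 = γ * ((γ - 1) * (E - m ^ 2 / (2 * ρ))) / ρ)
    (J : Matrix (Fin 3) (Fin 3) ℝ)
    (hJ : ∀ i j, J i j =
      fderiv ℝ (fun q : Fin 3 → ℝ => pressureFlux γ q i) ![ρ, m, E] (Pi.single j 1)) :
    (∀ t : ℝ, (t • (1 : Matrix (Fin 3) (Fin 3) ℝ) - J).det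
        = t * (t ^ 2 - u * t - c2)) ∧
    {t : ℝ | (t • (1 : Matrix (Fin 3) (Fin 3) ℝ) - J).det = 0}
      = {0, (u + Real.sqrt (u ^ 2 + 4 * c2)) / 2,
          (u - Real.sqrt (u ^ 2 + 4 * c2)) / 2} := by
  have hρ' : ρ ≠ 0 := ne_of_gt hρ
  set P : Fin 3 → ℝ := ![ρ, m, E] with hP
  have hπ : ∀ j, HasFDerivAt (fun q : Fin 3 → ℝ => q j) (pfProj j) P :=
    fun j => (pfProj j).hasFDerivAt
  have hP0 : P 0 = ρ := rfl
  have hP1 : P 1 = m := rfl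
  have hP2 : P 2 = E := rfl
  have hden : HasFDerivAt (fun q : Fin 3 → ℝ => 2 * q 0) ((2:ℝ) • pfProj 0) P :=
    (hπ 0).const_mul 2
  have hsq : HasFDerivAt (fun q : Fin 3 → ℝ => q 1 ^ 2) (m • pfProj 1 + m • pfProj 1) P := by
    simpa [pow_two, hP1] using (hπ 1).fun_mul (hπ 1)
  have hden0 : (2 * P 0) ≠ 0 := by rw [hP0]; positivity
  have hρ0 : P 0 ≠ 0 := by rw [hP0]; positivity
  have hdiv := hsq.mul ((hasFDerivAt_inv hden0).comp P hden)
  have hA := (hπ 2).sub hdiv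
  have hf1 := hA.const_mul (γ - 1)
  have hB := hA.add (hA.const_mul (γ - 1))
  have hU := (hπ 1).mul ((hasFDerivAt_inv hρ0).comp P (hπ 0))
  have hf2 := hB.mul hU
  have hfd1 : fderiv ℝ (fun q : Fin 3 → ℝ => pressureFlux γ q 1) P = _ := hf1.fderiv
  have hfd2 : fderiv ℝ (fun q : Fin 3 → ℝ => pressureFlux γ q 2) P = _ := hf2.fderiv
  -- entries
  have e0 : ∀ j, J 0 j = 0 := by
    intro j
    rw [hJ]
    have h : (fun q : Fin 3 → ℝ => pressureFlux γ q 0) = fun _ => (0:ℝ) := rfl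
    rw [h, fderiv_fun_const]
    simp
  have e10 : J 1 0 = (γ - 1) * m ^ 2 / (2 * ρ ^ 2) := by
    rw [hJ, hfd1]
    simp [pfProj, hP0, hP1, hP2, Pi.single_apply]
    field_simp
  have e11 : J 1 1 = -((γ - 1) * m / ρ) := by
    rw [hJ, hfd1]
    simp [pfProj, hP0, hP1, hP2, Pi.single_apply]
    field_simp
    ring
  have e12 : J 1 2 = γ - 1 := by
    rw [hJ, hfd1]
    simp [pfProj, hP0, hP1, hP2, Pi.single_apply]
  have e20 : J 2 0 = γ * (m ^ 3 / ρ ^ 3 - E * m / ρ ^ 2) := by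
    rw [hJ, hfd2]
    simp [pfProj, hP0, hP1, hP2, Pi.single_apply]
    field_simp
    ring
  have e21 : J 2 1 = γ * E / ρ - 3 * γ * m ^ 2 / (2 * ρ ^ 2) := by
    rw [hJ, hfd2]
    simp [pfProj, hP0, hP1, hP2, Pi.single_apply]
    field_simp
    ring
  have e22 : J 2 2 = γ * m / ρ := by
    rw [hJ, hfd2]
    simp [pfProj, hP0, hP1, hP2, Pi.single_apply]
    field_simp
    ring
  clear hfd1 hfd2 hf1 hf2 hB hU hA hdiv hsq hden hπ hJ
  have hdet : ∀ t : ℝ, (t • (1 : Matrix (Fin 3) (Fin 3) ℝ) - J).det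
      = t * (t ^ 2 - u * t - c2) := by
    intro t
    rw [Matrix.det_fin_three]
    simp [Matrix.one_apply, e0, e10, e11, e12, e20, e21, e22]
    rw [hu, hc2]
    field_simp
    ring
  refine ⟨hdet, ?_⟩
  -- positivity of c2 and the discriminant
  have hc2pos : 0 < c2 := by
    have h1 : 0 < E - m ^ 2 / (2 * ρ) := by
      by_contra h
      push_neg at h
      have : (E - m ^ 2 / (2 * ρ)) / ρ ≤ 0 := div_nonpos_of_nonpos_of_nonneg h hρ.le
      linarith
    rw [hc2]
    have : 0 < γ - 1 := by linarith
    positivity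
  have hD : 0 < u ^ 2 + 4 * c2 := by positivity
  have hs : Real.sqrt (u ^ 2 + 4 * c2) ^ 2 = u ^ 2 + 4 * c2 := Real.sq_sqrt hD.le
  set s := Real.sqrt (u ^ 2 + 4 * c2) with hsdef
  have hfac : ∀ t : ℝ, t ^ 2 - u * t - c2 = (t - (u + s) / 2) * (t - (u - s) / 2) := by
    intro t
    have : s ^ 2 = u ^ 2 + 4 * c2 := hs
    nlinarith [this]
  ext t
  simp only [Set.mem_setOf_eq, hdet t, hfac t, Set.mem_insert_iff, Set.mem_singleton_iff,
    mul_eq_zero, sub_eq_zero]
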